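/- arXiv:2009.00102 — 3 statements merged into one kernel-verified Lean document; each statement's English description precedes it below -/
import Mathlib

section
/- Let D ≥ 1, let K and L be constant skew-symmetric real D×D matrices, let S : ℝ^D → ℝ be continuously differentiable, and let z : ℝ × ℝ → ℝ^D, written z(t,x), be twice continuously differentiable and satisfy the multisymplectic PDE K ∂_t z + L ∂_x z = ∇S(z) at every point. Define the energy density E(t,x) := ½ z·(L ∂_x z) − S(z) and the energy flux F(t,x) := ½ (∂_t z)·(L z). Then ∂_t E + ∂_x F = 0 at every point (t,x) ∈ ℝ². -/
/-!
Write `a = ∂_t z`, `b = ∂_x z` and `c = ∂_t ∂_x z = ∂_x ∂_t z` (Schwarz). The product rule gives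
`∂_t E + ∂_x F = a·Lb + ½ (z·Lc + c·Lz) − ∇S(z)·a`, the bracket vanishes because `L` is skew, and
dotting the PDE with `a` gives `∇S(z)·a = a·Ka + a·Lb = a·Lb` because `K` is skew.
-/

open Matrix

/-- Gradient of `S : ℝ^D → ℝ`, componentwise via the Fréchet derivative. -/
noncomputable def grad {D : ℕ} (S : (Fin D → ℝ) → ℝ) (p : Fin D → ℝ) : Fin D → ℝ :=
  fun i => fderiv ℝ S p (Pi.single i 1)

/-- Partial derivative in the first (time) variable. -/
noncomputable def pt {E : Type*} [NormedAddCommGroup E] [NormedSpace ℝ E]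
    (z : ℝ × ℝ → E) (p : ℝ × ℝ) : E :=
  deriv (fun s => z (s, p.2)) p.1

/-- Partial derivative in the second (space) variable. -/
noncomputable def px {E : Type*} [NormedAddCommGroup E] [NormedSpace ℝ E]
    (z : ℝ × ℝ → E) (p : ℝ × ℝ) : E :=
  deriv (fun y => z (p.1, y)) p.2

section SkewSymmetric

variable {ι R : Type*} [Fintype ι] [CommRing R] {M : Matrix ι ι R}

theorem dotProduct_mulVec_eq_neg_of_transpose_eq_neg (hM : Mᵀ = -M) (u v : ι → R) :
    u ⬝ᵥ M *ᵥ v = -(v ⬝ᵥ M *ᵥ u) := by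
  rw [dotProduct_mulVec, ← mulVec_transpose, hM, neg_mulVec, neg_dotProduct, dotProduct_comm]

theorem dotProduct_mulVec_self_eq_zero_of_transpose_eq_neg [NoZeroDivisors R] [CharZero R]
    (hM : Mᵀ = -M) (u : ι → R) : u ⬝ᵥ M *ᵥ u = 0 :=
  CharZero.eq_neg_self_iff.mp (dotProduct_mulVec_eq_neg_of_transpose_eq_neg hM u u)

end SkewSymmetric

theorem HasDerivAt.dotProduct_mulVec {𝕜 m n : Type*} [NontriviallyNormedField 𝕜]
    [CompleteSpace 𝕜] [Fintype m] [Fintype n] [DecidableEq m] [DecidableEq n] (M : Matrix m n 𝕜)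
    {f : 𝕜 → m → 𝕜} {g : 𝕜 → n → 𝕜} {f' : m → 𝕜} {g' : n → 𝕜} {t : 𝕜}
    (hf : HasDerivAt f f' t) (hg : HasDerivAt g g' t) :
    HasDerivAt (fun s => f s ⬝ᵥ M *ᵥ g s) (f' ⬝ᵥ M *ᵥ g t + f t ⬝ᵥ M *ᵥ g') t := by
  simpa [Matrix.toLinearMap₂'_apply', add_comm] using
    (Matrix.toLinearMap₂' 𝕜 M).toContinuousBilinearMap.hasDerivAt_of_bilinear
      (fun _ => hf) (fun _ => hg)

theorem fderiv_apply_eq_grad_dotProduct {D : ℕ} (S : (Fin D → ℝ) → ℝ) (x v : Fin D → ℝ) :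
    fderiv ℝ S x v = grad S x ⬝ᵥ v := by
  conv_lhs => rw [← Finset.univ_sum_single v]
  simp only [map_sum, dotProduct, grad]
  refine Finset.sum_congr rfl fun i _ => ?_
  rw [mul_comm, ← smul_eq_mul, ← map_smul, ← Pi.single_smul', smul_eq_mul, mul_one]

section PartialDerivatives

variable {E : Type*} [NormedAddCommGroup E] [NormedSpace ℝ E] {f : ℝ × ℝ → E} {p : ℝ × ℝ}

theorem DifferentiableAt.hasDerivAt_fderiv_apply_fst (hf : DifferentiableAt ℝ f p) :
    HasDerivAt (fun s => f (s, p.2)) (fderiv ℝ f p (1, 0)) p.1 :=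
  hf.hasFDerivAt.comp_hasDerivAt p.1 ((hasDerivAt_id p.1).prodMk (hasDerivAt_const p.1 p.2))

theorem DifferentiableAt.hasDerivAt_fderiv_apply_snd (hf : DifferentiableAt ℝ f p) :
    HasDerivAt (fun y => f (p.1, y)) (fderiv ℝ f p (0, 1)) p.2 :=
  hf.hasFDerivAt.comp_hasDerivAt p.2 ((hasDerivAt_const p.2 p.1).prodMk (hasDerivAt_id p.2))

theorem DifferentiableAt.pt_eq (hf : DifferentiableAt ℝ f p) : pt f p = fderiv ℝ f p (1, 0) :=
  hf.hasDerivAt_fderiv_apply_fst.deriv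

theorem DifferentiableAt.px_eq (hf : DifferentiableAt ℝ f p) : px f p = fderiv ℝ f p (0, 1) :=
  hf.hasDerivAt_fderiv_apply_snd.deriv

theorem DifferentiableAt.hasDerivAt_pt (hf : DifferentiableAt ℝ f p) :
    HasDerivAt (fun s => f (s, p.2)) (pt f p) p.1 :=
  hf.pt_eq ▸ hf.hasDerivAt_fderiv_apply_fst

theorem DifferentiableAt.hasDerivAt_px (hf : DifferentiableAt ℝ f p) :
    HasDerivAt (fun y => f (p.1, y)) (px f p) p.2 :=
  hf.px_eq ▸ hf.hasDerivAt_fderiv_apply_snd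

theorem ContDiff.pt_eq_fderiv_apply {n : WithTop ℕ∞} (hf : ContDiff ℝ n f) (hn : n ≠ 0) :
    pt f = fun q => fderiv ℝ f q (1, 0) :=
  funext fun q => (hf.differentiable hn q).pt_eq

theorem ContDiff.px_eq_fderiv_apply {n : WithTop ℕ∞} (hf : ContDiff ℝ n f) (hn : n ≠ 0) :
    px f = fun q => fderiv ℝ f q (0, 1) :=
  funext fun q => (hf.differentiable hn q).px_eq

theorem contDiff_pt {m n : WithTop ℕ∞} (hf : ContDiff ℝ n f) (hmn : m + 1 ≤ n) :
    ContDiff ℝ m (pt f) := by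
  rw [hf.pt_eq_fderiv_apply (by rintro rfl; simp at hmn)]
  exact (hf.fderiv_right hmn).clm_apply contDiff_const

theorem contDiff_px {m n : WithTop ℕ∞} (hf : ContDiff ℝ n f) (hmn : m + 1 ≤ n) :
    ContDiff ℝ m (px f) := by
  rw [hf.px_eq_fderiv_apply (by rintro rfl; simp at hmn)]
  exact (hf.fderiv_right hmn).clm_apply contDiff_const

theorem pt_px_eq_px_pt (hf : ContDiff ℝ 2 f) : pt (px f) p = px (pt f) p := by
  have hf' : Differentiable ℝ (fderiv ℝ f) :=
    (hf.fderiv_right one_add_one_eq_two.le).differentiable one_ne_zero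
  have fderiv_fderiv_apply (v u : ℝ × ℝ) :
      fderiv ℝ (fun q => fderiv ℝ f q v) p u = fderiv ℝ (fderiv ℝ f) p u v := by
    rw [fderiv_clm_apply (hf' p) (differentiableAt_const v)]
    simp
  have hdiff (v : ℝ × ℝ) : DifferentiableAt ℝ (fun q => fderiv ℝ f q v) p :=
    (hf' p).clm_apply (differentiableAt_const v)
  rw [hf.px_eq_fderiv_apply two_ne_zero, hf.pt_eq_fderiv_apply two_ne_zero, (hdiff _).pt_eq,
    (hdiff _).px_eq, fderiv_fderiv_apply, fderiv_fderiv_apply]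
  exact hf.contDiffAt.isSymmSndFDerivAt (by simp) _ _

end PartialDerivatives

theorem energy_conservation_law_general
    (D : ℕ)
    (K L : Matrix (Fin D) (Fin D) ℝ)
    (hK : Kᵀ = -K) (hL : Lᵀ = -L)
    (S : (Fin D → ℝ) → ℝ) (hS : ContDiff ℝ 1 S)
    (z : ℝ × ℝ → Fin D → ℝ) (hz : ContDiff ℝ 2 z)
    (hpde : ∀ p : ℝ × ℝ, K.mulVec (pt z p) + L.mulVec (px z p) = grad S (z p)) :
    ∀ p : ℝ × ℝ,
      pt (fun q => (1 / 2 : ℝ) * (z q ⬝ᵥ L.mulVec (px z q)) - S (z q)) p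
        + px (fun q => (1 / 2 : ℝ) * (pt z q ⬝ᵥ L.mulVec (z q))) p = 0 := by
  intro p
  have hz₀ : DifferentiableAt ℝ z p := hz.differentiable two_ne_zero p
  have hzt : DifferentiableAt ℝ (pt z) p :=
    (contDiff_pt hz one_add_one_eq_two.le).differentiable one_ne_zero p
  have hzx : DifferentiableAt ℝ (px z) p :=
    (contDiff_px hz one_add_one_eq_two.le).differentiable one_ne_zero p
  have hSz : HasDerivAt (fun s => S (z (s, p.2))) (grad S (z p) ⬝ᵥ pt z p) p.1 := by
    rw [← fderiv_apply_eq_grad_dotProduct]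
    exact (hS.differentiable one_ne_zero (z p)).hasFDerivAt.comp_hasDerivAt p.1 hz₀.hasDerivAt_pt
  have hE := ((hz₀.hasDerivAt_pt.dotProduct_mulVec L hzx.hasDerivAt_pt).const_mul
    (1 / 2 : ℝ)).fun_sub hSz
  have hF := (hzt.hasDerivAt_px.dotProduct_mulVec L hz₀.hasDerivAt_px).const_mul (1 / 2 : ℝ)
  have hgrad : grad S (z p) ⬝ᵥ pt z p = pt z p ⬝ᵥ L *ᵥ px z p := by
    rw [← hpde p, add_dotProduct, dotProduct_comm,
      dotProduct_mulVec_self_eq_zero_of_transpose_eq_neg hK, zero_add, dotProduct_comm]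
  rw [pt, px, hE.deriv, hF.deriv, Prod.mk.eta, pt_px_eq_px_pt hz, hgrad,
    dotProduct_mulVec_eq_neg_of_transpose_eq_neg hL (z p)]
  ring

/-- Energy conservation law for multisymplectic PDEs:
`∂_t E + ∂_x F = 0` where `E = ½ z·(L ∂_x z) − S(z)` and `F = ½ (∂_t z)·(L z)`. -/
theorem energy_conservation_law
    (D : ℕ) (hD : 1 ≤ D)
    (K L : Matrix (Fin D) (Fin D) ℝ)
    (hK : Kᵀ = -K) (hL : Lᵀ = -L)
    (S : (Fin D → ℝ) → ℝ) (hS : ContDiff ℝ 1 S)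
    (z : ℝ × ℝ → Fin D → ℝ) (hz : ContDiff ℝ 2 z)
    (hpde : ∀ p : ℝ × ℝ, K.mulVec (pt z p) + L.mulVec (px z p) = grad S (z p)) :
    ∀ p : ℝ × ℝ,
      pt (fun q => (1 / 2 : ℝ) * (z q ⬝ᵥ L.mulVec (px z q)) - S (z q)) p
        + px (fun q => (1 / 2 : ℝ) * (pt z q ⬝ᵥ L.mulVec (z q))) p = 0 :=
  energy_conservation_law_general D K L hK hL S hS z hz hpde
end

section
/- Let D ≥ 1, let M ≥ 1 and let 0 = x₀ < x₁ < ⋯ < x_M = 1 be a partition of [0,1]. For each m = 0,…,M−1 let f_m, g_m : [x_m, x_{m+1}] → ℝ^D be continuously differentiable. For m = 1,…,M−1 define the jump ⟦f⟧_m := f_{m−1}(x_m) − f_m(x_m), and with periodic identification define ⟦f⟧_0 = ⟦f⟧_M := f_{M−1}(1) − f_0(0); define ⟦g⟧_m analogously. Then Σ_{m=0}^{M−1} [ ∫_{x_m}^{x_{m+1}} f_m'·g_m dx − ½ ⟦f⟧_m·g_m(x_m) − ½ ⟦f⟧_{m+1}·g_m(x_{m+1}) ] = − Σ_{m=0}^{M−1}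 [ ∫_{x_m}^{x_{m+1}} g_m'·f_m dx − ½ ⟦g⟧_m·f_m(x_m) − ½ ⟦g⟧_{m+1}·f_m(x_{m+1}) ]. -/
open Matrix intervalIntegral Finset

/-- The jump of the piecewise function `f = (f_m)` at the node `x m`, with
periodic identification of the nodes `x 0 = 0` and `x M = 1`. -/
noncomputable def jmp {D : ℕ} (M : ℕ) (x : ℕ → ℝ) (f : ℕ → ℝ → Fin D → ℝ)
    (m : ℕ) : Fin D → ℝ :=
  if m = 0 ∨ m = M then f (M - 1) (x M) - f 0 (x 0)
  else f (m - 1) (x m) - f m (x m)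

/-!
Integrating by parts on each element, the two element sums add up to a sum of boundary terms.
At every node the boundary terms of the two neighbouring elements recombine into the same
quantity `½ (f⁻ · g⁺ + f⁺ · g⁻)` of the one-sided traces, once with each sign, so the total
telescopes around the circle to zero.
-/

section Calculus

variable {𝕜 : Type*} [NontriviallyNormedField 𝕜] {ι : Type*} [Fintype ι]

theorem HasDerivWithinAt.dotProduct {u v : 𝕜 → ι → 𝕜} {u' v' : ι → 𝕜} {s : Set 𝕜} {t : 𝕜}
    (hu : HasDerivWithinAt u u' s t) (hv : HasDerivWithinAt v v' s t) :
    HasDerivWithinAt (fun t => u t ⬝ᵥ v t) (u' ⬝ᵥ v t + u t ⬝ᵥ v') s t := by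
  unfold _root_.dotProduct
  rw [← Finset.sum_add_distrib]
  exact HasDerivWithinAt.fun_sum fun i _ =>
    (hasDerivWithinAt_pi.1 hu i).mul (hasDerivWithinAt_pi.1 hv i)

theorem ContinuousOn.dotProduct {X : Type*} [TopologicalSpace X] {u v : X → ι → 𝕜} {s : Set X}
    (hu : ContinuousOn u s) (hv : ContinuousOn v s) :
    ContinuousOn (fun t => u t ⬝ᵥ v t) s :=
  (continuous_fst.dotProduct continuous_snd).comp_continuousOn (hu.prodMk hv)

open Set in
theorem integral_derivWithin_dotProduct_add {a b : ℝ} (hab : a < b) {u v : ℝ → ι → ℝ}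
    (hu : ContDiffOn ℝ 1 u (Icc a b)) (hv : ContDiffOn ℝ 1 v (Icc a b)) :
    (∫ t in a..b, derivWithin u (Icc a b) t ⬝ᵥ v t)
      + (∫ t in a..b, derivWithin v (Icc a b) t ⬝ᵥ u t) = u b ⬝ᵥ v b - u a ⬝ᵥ v a := by
  have hs := uniqueDiffOn_Icc hab
  have hderiv (t : ℝ) (ht : t ∈ Icc a b) : HasDerivWithinAt (fun t => u t ⬝ᵥ v t)
      (derivWithin u (Icc a b) t ⬝ᵥ v t + derivWithin v (Icc a b) t ⬝ᵥ u t) (Icc a b) t := by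
    rw [dotProduct_comm _ (u t)]
    exact (hu.differentiableOn one_ne_zero t ht).hasDerivWithinAt.dotProduct
      (hv.differentiableOn one_ne_zero t ht).hasDerivWithinAt
  have hint {w w' : ℝ → ι → ℝ} (hw : ContDiffOn ℝ 1 w (Icc a b))
      (hw' : ContDiffOn ℝ 1 w' (Icc a b)) :
      IntervalIntegrable (fun t => derivWithin w (Icc a b) t ⬝ᵥ w' t) MeasureTheory.volume a b :=
    ((hw.continuousOn_derivWithin hs le_rfl).dotProduct hw'.continuousOn).intervalIntegrable_of_Icc
      hab.le
  rw [← integral_add (hint hu hv) (hint hv hu)]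
  exact integral_eq_sub_of_hasDeriv_right_of_le hab.le (hu.continuousOn.dotProduct hv.continuousOn)
    (fun t ht => ((hderiv t (Ioo_subset_Icc_self ht)).hasDerivAt
      (Icc_mem_nhds ht.1 ht.2)).hasDerivWithinAt) ((hint hu hv).add (hint hv hu))

end Calculus

section Nodes

variable {ι : Type*} [Fintype ι]

theorem dotProduct_sub_half_jump (u u' v v' : ι → ℝ) :
    u ⬝ᵥ v - 1 / 2 * ((u - u') ⬝ᵥ v + (v - v') ⬝ᵥ u) = 1 / 2 * (u ⬝ᵥ v' + u' ⬝ᵥ v) := by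
  simp only [sub_dotProduct, dotProduct_comm v u, dotProduct_comm v' u]
  ring

theorem dotProduct_add_half_jump (u u' v v' : ι → ℝ) :
    u' ⬝ᵥ v' + 1 / 2 * ((u - u') ⬝ᵥ v' + (v - v') ⬝ᵥ u') = 1 / 2 * (u ⬝ᵥ v' + u' ⬝ᵥ v) := by
  simp only [sub_dotProduct, dotProduct_comm v u', dotProduct_comm v' u']
  ring

variable {E : Type*} (M : ℕ) (x : ℕ → ℝ)

noncomputable def traceLeft (f : ℕ → ℝ → E) (m : ℕ) : E :=
  if m = 0 ∨ m = M then f (M - 1) (x M) else f (m - 1) (x m)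

noncomputable def traceRight (f : ℕ → ℝ → E) (m : ℕ) : E :=
  if m = 0 ∨ m = M then f 0 (x 0) else f m (x m)

variable {M x}

theorem traceRight_of_lt {f : ℕ → ℝ → E} {m : ℕ} (hm : m < M) :
    traceRight M x f m = f m (x m) := by
  rcases Nat.eq_zero_or_pos m with rfl | hpos
  · simp [traceRight]
  · simp [traceRight, hpos.ne', hm.ne]

theorem traceLeft_succ_of_lt {f : ℕ → ℝ → E} {m : ℕ} (hm : m < M) :
    traceLeft M x f (m + 1) = f m (x (m + 1)) := by
  rcases (by omega : m + 1 = M ∨ m + 1 < M) with rfl | hlt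
  · simp [traceLeft]
  · simp [traceLeft, hlt.ne]

theorem jmp_eq_traceLeft_sub_traceRight {D : ℕ} (f : ℕ → ℝ → Fin D → ℝ) (m : ℕ) :
    jmp M x f m = traceLeft M x f m - traceRight M x f m := by
  unfold jmp traceLeft traceRight
  split_ifs <;> rfl

variable (M x)

noncomputable def nodeFlux (f g : ℕ → ℝ → ι → ℝ) (m : ℕ) : ℝ :=
  1 / 2 * (traceLeft M x f m ⬝ᵥ traceRight M x g m + traceRight M x f m ⬝ᵥ traceLeft M x g m)

theorem nodeFlux_self (f g : ℕ → ℝ → ι → ℝ) : nodeFlux M x f g M = nodeFlux M x f g 0 := by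
  simp [nodeFlux, traceLeft, traceRight]

end Nodes

noncomputable def elementTerm {D : ℕ} (M : ℕ) (x : ℕ → ℝ) (f g : ℕ → ℝ → Fin D → ℝ) (m : ℕ) :
    ℝ :=
  (∫ t in (x m)..(x (m + 1)), derivWithin (f m) (Set.Icc (x m) (x (m + 1))) t ⬝ᵥ g m t)
    - (1 / 2 : ℝ) * (jmp M x f m ⬝ᵥ g m (x m))
    - (1 / 2 : ℝ) * (jmp M x f (m + 1) ⬝ᵥ g m (x (m + 1)))

theorem elementTerm_add_elementTerm {D M : ℕ} {x : ℕ → ℝ} {f g : ℕ → ℝ → Fin D → ℝ} {m : ℕ}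
    (hm : m < M) (hx : x m < x (m + 1))
    (hf : ContDiffOn ℝ 1 (f m) (Set.Icc (x m) (x (m + 1))))
    (hg : ContDiffOn ℝ 1 (g m) (Set.Icc (x m) (x (m + 1)))) :
    elementTerm M x f g m + elementTerm M x g f m
      = nodeFlux M x f g (m + 1) - nodeFlux M x f g m := by
  have hparts := integral_derivWithin_dotProduct_add hx hf hg
  have hright := dotProduct_sub_half_jump (f m (x (m + 1))) (traceRight M x f (m + 1))
    (g m (x (m + 1))) (traceRight M x g (m + 1))
  have hleft := dotProduct_add_half_jump (traceLeft M x f m) (f m (x m))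
    (traceLeft M x g m) (g m (x m))
  simp only [elementTerm, nodeFlux, jmp_eq_traceLeft_sub_traceRight, traceRight_of_lt hm,
    traceLeft_succ_of_lt hm]
  linear_combination hparts + hright - hleft

theorem global_skew_symmetry_general
    (D M : ℕ)
    (x : ℕ → ℝ)
    (hxmono : ∀ m < M, x m < x (m + 1))
    (f g : ℕ → ℝ → Fin D → ℝ)
    (hf : ∀ m < M, ContDiffOn ℝ 1 (f m) (Set.Icc (x m) (x (m + 1))))
    (hg : ∀ m < M, ContDiffOn ℝ 1 (g m) (Set.Icc (x m) (x (m + 1)))) :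
    (∑ m ∈ Finset.range M,
        ((∫ t in (x m)..(x (m + 1)),
            derivWithin (f m) (Set.Icc (x m) (x (m + 1))) t ⬝ᵥ g m t)
          - (1 / 2 : ℝ) * (jmp M x f m ⬝ᵥ g m (x m))
          - (1 / 2 : ℝ) * (jmp M x f (m + 1) ⬝ᵥ g m (x (m + 1)))))
      = -∑ m ∈ Finset.range M,
          ((∫ t in (x m)..(x (m + 1)),
              derivWithin (g m) (Set.Icc (x m) (x (m + 1))) t ⬝ᵥ f m t)
            - (1 / 2 : ℝ) * (jmp M x g m ⬝ᵥ f m (x m))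
            - (1 / 2 : ℝ) * (jmp M x g (m + 1) ⬝ᵥ f m (x (m + 1)))) := by
  rw [eq_neg_iff_add_eq_zero, ← Finset.sum_add_distrib]
  calc _ = ∑ m ∈ Finset.range M, (nodeFlux M x f g (m + 1) - nodeFlux M x f g m) :=
        -- the two summands are `elementTerm M x f g m` and `elementTerm M x g f m` unfolded
        Finset.sum_congr rfl fun m hmem =>
          have hm := Finset.mem_range.1 hmem
          elementTerm_add_elementTerm hm (hxmono m hm) (hf m hm) (hg m hm)
    _ = 0 := by rw [Finset.sum_range_sub, nodeFlux_self, sub_self]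

/-- Global skew-symmetry of the discrete first-derivative operator of the
spatially discontinuous Galerkin method on the periodic domain `S¹ = [0,1)`:
`∫_{S¹} G(U)·V dx = − ∫_{S¹} U·G(V) dx` written out elementwise. -/
theorem global_skew_symmetry
    (D M : ℕ) (hD : 1 ≤ D) (hM : 1 ≤ M)
    (x : ℕ → ℝ) (hx0 : x 0 = 0) (hxM : x M = 1)
    (hxmono : ∀ m < M, x m < x (m + 1))
    (f g : ℕ → ℝ → Fin D → ℝ)
    (hf : ∀ m < M, ContDiffOn ℝ 1 (f m) (Set.Icc (x m) (x (m + 1))))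
    (hg : ∀ m < M, ContDiffOn ℝ 1 (g m) (Set.Icc (x m) (x (m + 1)))) :
    (∑ m ∈ Finset.range M,
        ((∫ t in (x m)..(x (m + 1)),
            derivWithin (f m) (Set.Icc (x m) (x (m + 1))) t ⬝ᵥ g m t)
          - (1 / 2 : ℝ) * (jmp M x f m ⬝ᵥ g m (x m))
          - (1 / 2 : ℝ) * (jmp M x f (m + 1) ⬝ᵥ g m (x (m + 1)))))
      = -∑ m ∈ Finset.range M,
          ((∫ t in (x m)..(x (m + 1)),
              derivWithin (g m) (Set.Icc (x m) (x (m + 1))) t ⬝ᵥ f m t)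
            - (1 / 2 : ℝ) * (jmp M x g m ⬝ᵥ f m (x m))
            - (1 / 2 : ℝ) * (jmp M x g (m + 1) ⬝ᵥ f m (x (m + 1)))) :=
  global_skew_symmetry_general D M x hxmono f g hf hg
end

section
/- Let D ≥ 1, let K and L be constant skew-symmetric real D×D matrices, let S : ℝ^D → ℝ be continuously differentiable, and let t₀ < t₁. Let Q = (t₀,t₁) × (0,1) with Lebesgue measure, let V be a closed subspace of L²(Q; ℝ^D) such that for every f ∈ V the functions Kf and Lf (pointwise matrix multiplication) also belong to V, and let P denote the orthogonal projection of L²(Q; ℝ^D) onto V. Let Z : ℝ × ℝ → ℝ^D be twice continuously differentiable and 1-periodic in x (Z(t, x+1) = Z(t,x) for all t, x), with the restriction of ∂_t Z to Q belonging to V, and suppose that for every φ ∈ V, ∫_Q ( K ∂_t Z + L ∂_x Z − ∇S(Z) )·φ dx dt = 0. Then the consistent discrete momentum conservation law holds: ∫_Q [ ∂_t( ½ (∂_x Z)·(K Z) ) + ∂_x( ½ (∂_t Z)·(K Z) ) − ∇S(Z)·P(∂_x Z) ] dx dt = 0. -/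
/-!
Skew-symmetry of `K` and the symmetry of second derivatives give the pointwise identity
`∂_t(½ Z_x·KZ) − ∂_x(½ Z_t·KZ) = Z_x·K Z_t`, so the integrand equals
`2 ∂_x(½ Z_t·KZ) + Z_x·K Z_t − ∇S(Z)·P Z_x`, and the first term integrates to zero over `Q`
by periodicity in `x`. Testing the scheme with `φ = P Z_x` gives `∫ Z_x·K Z_t = ∫ ∇S(Z)·φ`:
since `K Z_t ∈ V`, `⟨K Z_t, φ⟩ = ⟨Z_x, K Z_t⟩`, and since `L φ ∈ V` and `L` is skew,
`⟨L Z_x, φ⟩ = −⟨φ, L φ⟩ = 0`.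
-/

open MeasureTheory Matrix

/-- Matrix multiplication as a continuous linear map on Euclidean space. -/
noncomputable def mulVecCLM {D : ℕ} (A : Matrix (Fin D) (Fin D) ℝ) :
    EuclideanSpace ℝ (Fin D) →L[ℝ] EuclideanSpace ℝ (Fin D) :=
  LinearMap.toContinuousLinearMap (Matrix.toEuclideanLin A)

open scoped InnerProductSpace

section PartialDerivatives

variable {E : Type*} [NormedAddCommGroup E] [NormedSpace ℝ E] {z : ℝ × ℝ → E}

theorem hasDerivAt_pt (hz : Differentiable ℝ z) (t x : ℝ) :
    HasDerivAt (fun s => z (s, x)) (pt z (t, x)) t :=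
  (hz.comp (differentiable_id.prodMk (differentiable_const x))).differentiableAt.hasDerivAt

theorem hasDerivAt_px (hz : Differentiable ℝ z) (t x : ℝ) :
    HasDerivAt (fun y => z (t, y)) (px z (t, x)) x :=
  (hz.comp ((differentiable_const t).prodMk differentiable_id)).differentiableAt.hasDerivAt

theorem pt_eq_fderiv (hz : Differentiable ℝ z) (p : ℝ × ℝ) : pt z p = fderiv ℝ z p (1, 0) :=
  ((hz p).hasFDerivAt.comp_hasDerivAt p.1
    ((hasDerivAt_id p.1).prodMk (hasDerivAt_const p.1 p.2))).deriv

theorem px_eq_fderiv (hz : Differentiable ℝ z) (p : ℝ × ℝ) : px z p = fderiv ℝ z p (0, 1) :=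
  ((hz p).hasFDerivAt.comp_hasDerivAt p.2
    ((hasDerivAt_const p.2 p.1).prodMk (hasDerivAt_id p.2))).deriv

theorem contDiff_pt_s15 {n : ℕ} (hz : ContDiff ℝ (n + 1) z) : ContDiff ℝ n (pt z) := by
  rw [funext (pt_eq_fderiv (hz.differentiable (by simp)))]
  exact (hz.fderiv_right le_rfl).clm_apply contDiff_const

theorem contDiff_px_s15 {n : ℕ} (hz : ContDiff ℝ (n + 1) z) : ContDiff ℝ n (px z) := by
  rw [funext (px_eq_fderiv (hz.differentiable (by simp)))]
  exact (hz.fderiv_right le_rfl).clm_apply contDiff_const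

theorem pt_px_comm (hz : ContDiff ℝ 2 z) (p : ℝ × ℝ) : pt (px z) p = px (pt z) p := by
  have hz1 : Differentiable ℝ z := hz.differentiable (by simp)
  have hdz : Differentiable ℝ (fderiv ℝ z) :=
    (hz.fderiv_right (m := 1) le_rfl).differentiable one_ne_zero
  have hfderiv_apply (v w : ℝ × ℝ) :
      fderiv ℝ (fun q => fderiv ℝ z q v) p w = fderiv ℝ (fderiv ℝ z) p w v := by
    rw [fderiv_clm_apply (hdz p) (differentiableAt_const v)]
    simp
  rw [funext (px_eq_fderiv hz1), funext (pt_eq_fderiv hz1),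
    pt_eq_fderiv (hdz.clm_apply (differentiable_const _)),
    px_eq_fderiv (hdz.clm_apply (differentiable_const _)), hfderiv_apply, hfderiv_apply]
  exact (hz.contDiffAt.isSymmSndFDerivAt (by simp)) _ _

theorem pt_of_periodic {c : ℝ} (hper : ∀ t x, z (t, x + c) = z (t, x)) (t x : ℝ) :
    pt z (t, x + c) = pt z (t, x) := by
  simp only [pt, hper]

end PartialDerivatives

theorem setIntegral_px_eq_zero {E : Type*} [NormedAddCommGroup E] [NormedSpace ℝ E]
    [CompleteSpace E] {g : ℝ × ℝ → E} (hg : ContDiff ℝ 1 g) {a b : ℝ} (hab : a ≤ b)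
    (hper : ∀ t, g (t, b) = g (t, a)) (t₀ t₁ : ℝ) :
    ∫ p in Set.Ioo t₀ t₁ ×ˢ Set.Ioo a b, px g p = 0 := by
  have hpx : Continuous (px g) := (contDiff_px_s15 (n := 0) hg).continuous
  have hint : IntegrableOn (px g) (Set.Ioo t₀ t₁ ×ˢ Set.Ioo a b) :=
    (hpx.continuousOn.integrableOn_compact (isCompact_Icc.prod isCompact_Icc)).mono_set
      (Set.prod_mono Set.Ioo_subset_Icc_self Set.Ioo_subset_Icc_self)
  have hslice (t : ℝ) : ∫ x in Set.Ioo a b, px g (t, x) = 0 := by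
    rw [← integral_Ioc_eq_integral_Ioo, ← intervalIntegral.integral_of_le hab,
      intervalIntegral.integral_eq_sub_of_hasDerivAt
        (fun x _ => hasDerivAt_px (hg.differentiable one_ne_zero) t x)
        ((hpx.comp (continuous_const.prodMk continuous_id)).intervalIntegrable a b),
      hper, sub_self]
  rw [Measure.volume_eq_prod, setIntegral_prod _ hint]
  simp [hslice]

theorem Continuous.memLp_restrict_of_subset_isCompact {X F : Type*} [TopologicalSpace X]
    [T2Space X] [MeasurableSpace X] [OpensMeasurableSpace X] {μ : Measure X}
    [IsFiniteMeasureOnCompacts μ] [NormedAddCommGroup F] {f : X → F} (hf : Continuous f)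
    {s k : Set X} (hk : IsCompact k) (hsk : s ⊆ k) (p : ENNReal) : MemLp f p (μ.restrict s) := by
  have : IsFiniteMeasure (μ.restrict k) := isFiniteMeasure_restrict.2 hk.measure_lt_top.ne
  obtain ⟨C, hC⟩ := hk.exists_bound_of_continuousOn hf.continuousOn
  refine (MemLp.of_bound ?_ C (ae_restrict_of_forall_mem hk.isClosed.measurableSet hC)).mono_measure
    (Measure.restrict_mono hsk le_rfl)
  exact hf.continuousOn.aestronglyMeasurable_of_isCompact hk hk.isClosed.measurableSet

section L2

variable {α E : Type*} [MeasurableSpace α] {μ : Measure α} [NormedAddCommGroup E]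
  [InnerProductSpace ℝ E] {f g : α → E}

theorem integral_inner_eq_inner_toLp (hf : MemLp f 2 μ) (hg : MemLp g 2 μ) :
    ∫ a, ⟪f a, g a⟫_ℝ ∂μ = ⟪hf.toLp f, hg.toLp g⟫_ℝ := by
  rw [L2.inner_def]
  refine integral_congr_ae ?_
  filter_upwards [hf.coeFn_toLp, hg.coeFn_toLp] with a hfa hga
  rw [hfa, hga]

theorem MeasureTheory.MemLp.integrable_inner (hf : MemLp f 2 μ) (hg : MemLp g 2 μ) :
    Integrable (fun a => ⟪f a, g a⟫_ℝ) μ := by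
  refine (L2.integrable_inner (hf.toLp f) (hg.toLp g)).congr ?_
  filter_upwards [hf.coeFn_toLp, hg.coeFn_toLp] with a hfa hga
  rw [hfa, hga]

theorem ContinuousLinearMap.compLp_toLp (A : E →L[ℝ] E) (hf : MemLp f 2 μ) :
    A.compLp (hf.toLp f) = (A.comp_memLp' hf).toLp (fun a => A (f a)) := by
  refine Lp.ext ?_
  have hAf : MemLp (fun a => A (f a)) 2 μ := A.comp_memLp' hf
  filter_upwards [A.coeFn_compLp (hf.toLp f), hf.coeFn_toLp, hAf.coeFn_toLp] with a h₁ h₂ h₃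
  rw [h₁, h₂, h₃]

theorem ContinuousLinearMap.inner_compLp_left_of_skew {A : E →L[ℝ] E}
    (hA : ∀ a b, ⟪A a, b⟫_ℝ = -⟪a, A b⟫_ℝ) (u v : Lp E 2 μ) :
    ⟪A.compLp u, v⟫_ℝ = -⟪u, A.compLp v⟫_ℝ := by
  rw [L2.inner_def, L2.inner_def, ← integral_neg]
  refine integral_congr_ae ?_
  filter_upwards [A.coeFn_compLp u, A.coeFn_compLp v] with a hu hv
  rw [hu, hv, hA]

theorem ContinuousLinearMap.inner_compLp_self_of_skew {A : E →L[ℝ] E}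
    (hA : ∀ a b, ⟪A a, b⟫_ℝ = -⟪a, A b⟫_ℝ) (u : Lp E 2 μ) : ⟪u, A.compLp u⟫_ℝ = 0 := by
  have h := A.inner_compLp_left_of_skew hA u u
  rw [real_inner_comm] at h
  linarith

theorem inner_compLp_eq_inner_proj_of_galerkin {V : Submodule ℝ (Lp E 2 μ)}
    {P : Lp E 2 μ → Lp E 2 μ} (hPmem : ∀ u, P u ∈ V)
    (hPorth : ∀ u, ∀ v ∈ V, ⟪u - P u, v⟫_ℝ = 0) {A B : E →L[ℝ] E}
    (hB : ∀ a b, ⟪B a, b⟫_ℝ = -⟪a, B b⟫_ℝ) (hVA : ∀ u ∈ V, A.compLp u ∈ V)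
    (hVB : ∀ u ∈ V, B.compLp u ∈ V) {T X G : Lp E 2 μ} (hT : T ∈ V)
    (hgalerkin : ⟪A.compLp T + B.compLp X - G, P X⟫_ℝ = 0) :
    ⟪X, A.compLp T⟫_ℝ = ⟪G, P X⟫_ℝ := by
  have hproj : ∀ v ∈ V, ⟪X, v⟫_ℝ = ⟪P X, v⟫_ℝ := fun v hv => by
    rw [← sub_eq_zero, ← inner_sub_left]
    exact hPorth X v hv
  have hAterm : ⟪A.compLp T, P X⟫_ℝ = ⟪X, A.compLp T⟫_ℝ := by
    rw [hproj _ (hVA T hT), real_inner_comm]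
  have hBterm : ⟪B.compLp X, P X⟫_ℝ = 0 := by
    rw [B.inner_compLp_left_of_skew hB, hproj _ (hVB _ (hPmem X)),
      B.inner_compLp_self_of_skew hB, neg_zero]
  rw [inner_sub_left, inner_add_left, hAterm, hBterm] at hgalerkin
  linarith

theorem integral_inner_eq_of_galerkin {V : Submodule ℝ (Lp E 2 μ)}
    {P : Lp E 2 μ → Lp E 2 μ} (hPmem : ∀ u, P u ∈ V)
    (hPorth : ∀ u, ∀ v ∈ V, ⟪u - P u, v⟫_ℝ = 0) {A B : E →L[ℝ] E}
    (hB : ∀ a b, ⟪B a, b⟫_ℝ = -⟪a, B b⟫_ℝ) (hVA : ∀ u ∈ V, A.compLp u ∈ V)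
    (hVB : ∀ u ∈ V, B.compLp u ∈ V) {u w g : α → E} (hu : MemLp u 2 μ) (huV : hu.toLp u ∈ V)
    (hw : MemLp w 2 μ) (hg : MemLp g 2 μ)
    (hgalerkin : ∀ φ ∈ V, ∫ a, ⟪A (u a) + B (w a) - g a, φ a⟫_ℝ ∂μ = 0) :
    ∫ a, ⟪w a, A (u a)⟫_ℝ ∂μ = ∫ a, ⟪g a, P (hw.toLp w) a⟫_ℝ ∂μ := by
  have hAu : MemLp (fun a => A (u a)) 2 μ := A.comp_memLp' hu
  rw [integral_inner_eq_inner_toLp hw hAu, integral_inner_eq_inner_toLp hg (Lp.memLp _),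
    Lp.toLp_coeFn, ← A.compLp_toLp hu]
  refine inner_compLp_eq_inner_proj_of_galerkin hPmem hPorth hB hVA hVB huV ?_
  rw [A.compLp_toLp, B.compLp_toLp, ← MemLp.toLp_add, ← MemLp.toLp_sub,
    ← Lp.toLp_coeFn (P _) (Lp.memLp _), ← integral_inner_eq_inner_toLp]
  exact hgalerkin _ (hPmem _)

end L2

theorem inner_mulVecCLM_of_transpose_eq_neg {D : ℕ} {K : Matrix (Fin D) (Fin D) ℝ}
    (hK : Kᵀ = -K) (a b : EuclideanSpace ℝ (Fin D)) :
    ⟪mulVecCLM K a, b⟫_ℝ = -⟪a, mulVecCLM K b⟫_ℝ := by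
  have hadj : Matrix.toEuclideanLin Kᴴ = -Matrix.toEuclideanLin K := by
    rw [conjTranspose_eq_transpose_of_trivial, hK, map_neg]
  change ⟪Matrix.toEuclideanLin K a, b⟫_ℝ = -⟪a, Matrix.toEuclideanLin K b⟫_ℝ
  rw [← LinearMap.adjoint_inner_right, ← Matrix.toEuclideanLin_conjTranspose_eq_adjoint, hadj,
    LinearMap.neg_apply, inner_neg_right]

theorem ContDiff.continuous_gradient {F : Type*} [NormedAddCommGroup F] [InnerProductSpace ℝ F]
    [CompleteSpace F] {S : F → ℝ} (hS : ContDiff ℝ 1 S) : Continuous (gradient S) :=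
  (InnerProductSpace.toDual ℝ F).symm.continuous.comp (hS.continuous_fderiv one_ne_zero)

theorem pt_momentum_sub_px_flux {E : Type*} [NormedAddCommGroup E] [InnerProductSpace ℝ E]
    {A : E →L[ℝ] E} (hA : ∀ a b, ⟪A a, b⟫_ℝ = -⟪a, A b⟫_ℝ) {z : ℝ × ℝ → E}
    (hz : ContDiff ℝ 2 z) (p : ℝ × ℝ) :
    pt (fun q => (1 / 2 : ℝ) * ⟪px z q, A (z q)⟫_ℝ) p
        - px (fun q => (1 / 2 : ℝ) * ⟪pt z q, A (z q)⟫_ℝ) p = ⟪px z p, A (pt z p)⟫_ℝ := by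
  obtain ⟨t, x⟩ := p
  have hz1 : Differentiable ℝ z := hz.differentiable (by simp)
  have hpz1 : Differentiable ℝ (px z) := (contDiff_px_s15 (n := 1) hz).differentiable one_ne_zero
  have hptz1 : Differentiable ℝ (pt z) := (contDiff_pt_s15 (n := 1) hz).differentiable one_ne_zero
  have hdt : HasDerivAt (fun s => (1 / 2 : ℝ) * ⟪px z (s, x), A (z (s, x))⟫_ℝ)
      ((1 / 2 : ℝ) * (⟪px z (t, x), A (pt z (t, x))⟫_ℝ + ⟪pt (px z) (t, x), A (z (t, x))⟫_ℝ)) t :=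
    ((hasDerivAt_pt hpz1 t x).inner ℝ
      (A.hasFDerivAt.comp_hasDerivAt t (hasDerivAt_pt hz1 t x))).const_mul _
  have hdx : HasDerivAt (fun y => (1 / 2 : ℝ) * ⟪pt z (t, y), A (z (t, y))⟫_ℝ)
      ((1 / 2 : ℝ) * (⟪pt z (t, x), A (px z (t, x))⟫_ℝ + ⟪px (pt z) (t, x), A (z (t, x))⟫_ℝ)) x :=
    ((hasDerivAt_px hptz1 t x).inner ℝ
      (A.hasFDerivAt.comp_hasDerivAt x (hasDerivAt_px hz1 t x))).const_mul _
  rw [pt, px]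
  dsimp only
  rw [hdt.deriv, hdx.deriv, pt_px_comm hz]
  linarith [hA (pt z (t, x)) (px z (t, x)), real_inner_comm (px z (t, x)) (A (pt z (t, x)))]

theorem contDiff_inner_pt_apply {E : Type*} [NormedAddCommGroup E] [InnerProductSpace ℝ E]
    (A : E →L[ℝ] E) {z : ℝ × ℝ → E} (hz : ContDiff ℝ 2 z) :
    ContDiff ℝ 1 (fun q => ⟪pt z q, A (z q)⟫_ℝ) :=
  (contDiff_pt_s15 (n := 1) hz).inner ℝ (A.contDiff.comp (hz.of_le one_le_two))

theorem setIntegral_px_inner_pt_eq_zero {E : Type*} [NormedAddCommGroup E]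
    [InnerProductSpace ℝ E] (A : E →L[ℝ] E) {z : ℝ × ℝ → E} (hz : ContDiff ℝ 2 z)
    (hper : ∀ t x, z (t, x + 1) = z (t, x)) (c t₀ t₁ : ℝ) :
    ∫ p in Set.Ioo t₀ t₁ ×ˢ Set.Ioo 0 1, px (fun q => c * ⟪pt z q, A (z q)⟫_ℝ) p = 0 := by
  refine setIntegral_px_eq_zero ?_ zero_le_one (fun t => ?_) t₀ t₁
  · exact contDiff_const.mul (contDiff_inner_pt_apply A hz)
  · have hz1 := hper t 0
    have hpt1 := pt_of_periodic hper t 0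
    rw [zero_add] at hz1 hpt1
    simp only [hz1, hpt1]

theorem consistent_discrete_momentum_conservation_general
    (D : ℕ)
    (K L : Matrix (Fin D) (Fin D) ℝ)
    (hK : Kᵀ = -K) (hL : Lᵀ = -L)
    (S : EuclideanSpace ℝ (Fin D) → ℝ) (hS : ContDiff ℝ 1 S)
    (t₀ t₁ : ℝ)
    (Q : Set (ℝ × ℝ)) (hQ : Q = Set.Ioo t₀ t₁ ×ˢ Set.Ioo (0 : ℝ) 1)
    (μ : Measure (ℝ × ℝ)) (hμ : μ = volume.restrict Q)
    (V : Submodule ℝ (Lp (EuclideanSpace ℝ (Fin D)) 2 μ))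
    (hVK : ∀ f ∈ V, (mulVecCLM K).compLp f ∈ V)
    (hVL : ∀ f ∈ V, (mulVecCLM L).compLp f ∈ V)
    -- `P` is the orthogonal projection of `L²(Q; ℝ^D)` onto `V`
    (P : Lp (EuclideanSpace ℝ (Fin D)) 2 μ → Lp (EuclideanSpace ℝ (Fin D)) 2 μ)
    (hPmem : ∀ f, P f ∈ V)
    (hPorth : ∀ f, ∀ g ∈ V, (inner ℝ (f - P f) g : ℝ) = 0)
    (Z : ℝ × ℝ → EuclideanSpace ℝ (Fin D)) (hZ : ContDiff ℝ 2 Z)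
    (hper : ∀ t x : ℝ, Z (t, x + 1) = Z (t, x))
    (hZt : MemLp (pt Z) 2 μ) (hZtV : hZt.toLp (pt Z) ∈ V)
    (hZx : MemLp (px Z) 2 μ)
    (hscheme : ∀ φ ∈ V,
      (∫ p, (inner ℝ (mulVecCLM K (pt Z p) + mulVecCLM L (px Z p)
          - gradient S (Z p)) (φ p) : ℝ) ∂μ) = 0) :
    (∫ p,
        (pt (fun q => (1 / 2 : ℝ) * (inner ℝ (px Z q) (mulVecCLM K (Z q)) : ℝ)) p
          + px (fun q => (1 / 2 : ℝ) * (inner ℝ (pt Z q) (mulVecCLM K (Z q)) : ℝ)) p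
          - (inner ℝ (gradient S (Z p)) (P (hZx.toLp (px Z)) p) : ℝ)) ∂μ) = 0 := by
  subst hμ
  have hbox : IsCompact (Set.Icc t₀ t₁ ×ˢ Set.Icc (0 : ℝ) 1) := isCompact_Icc.prod isCompact_Icc
  have hQbox : Q ⊆ Set.Icc t₀ t₁ ×ˢ Set.Icc (0 : ℝ) 1 :=
    hQ ▸ Set.prod_mono Set.Ioo_subset_Icc_self Set.Ioo_subset_Icc_self
  have hG : MemLp (fun p => gradient S (Z p)) 2 (volume.restrict Q) :=
    (hS.continuous_gradient.comp hZ.continuous).memLp_restrict_of_subset_isCompact hbox hQbox 2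
  have hKZt : MemLp (fun p => mulVecCLM K (pt Z p)) 2 (volume.restrict Q) :=
    (mulVecCLM K).comp_memLp' hZt
  have hbalance := integral_inner_eq_of_galerkin hPmem hPorth
    (inner_mulVecCLM_of_transpose_eq_neg hL) hVK hVL hZt hZtV hZx hG hscheme
  set flux : ℝ × ℝ → ℝ := fun q => (1 / 2 : ℝ) * ⟪pt Z q, mulVecCLM K (Z q)⟫_ℝ
  have hflux_zero : ∫ p, px flux p ∂(volume.restrict Q) = 0 := by
    rw [hQ]
    exact setIntegral_px_inner_pt_eq_zero _ hZ hper _ t₀ t₁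
  have hflux_int : Integrable (px flux) (volume.restrict Q) := memLp_one_iff_integrable.1 <|
    (contDiff_px_s15 (n := 0) (contDiff_const.mul (contDiff_inner_pt_apply _ hZ))).continuous
      |>.memLp_restrict_of_subset_isCompact hbox hQbox 1
  have hW := hZx.integrable_inner hKZt
  have hGφ := hG.integrable_inner (Lp.memLp (P (hZx.toLp (px Z))))
  calc _ = ∫ p, 2 * px flux p
          + (⟪px Z p, mulVecCLM K (pt Z p)⟫_ℝ - ⟪gradient S (Z p), P (hZx.toLp (px Z)) p⟫_ℝ)
        ∂(volume.restrict Q) :=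
        integral_congr_ae <| ae_of_all _ fun p => by
          linarith [pt_momentum_sub_px_flux (inner_mulVecCLM_of_transpose_eq_neg hK) hZ p]
    _ = 0 := by
      rw [integral_add (hflux_int.const_mul 2) (hW.sub' hGφ), integral_const_mul,
        integral_sub hW hGφ, hflux_zero, hbalance]
      ring

/-- The consistent discrete momentum conservation law for the space-time finite
element method: `∫_Q [ ∂_t(½ (∂_x Z)·(K Z)) + ∂_x(½ (∂_t Z)·(K Z))
− ∇S(Z)·P(∂_x Z) ] = 0`, where `P` is the `L²(Q)` orthogonal projection onto
the test space `V`. -/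
theorem consistent_discrete_momentum_conservation
    (D : ℕ) (hD : 1 ≤ D)
    (K L : Matrix (Fin D) (Fin D) ℝ)
    (hK : Kᵀ = -K) (hL : Lᵀ = -L)
    (S : EuclideanSpace ℝ (Fin D) → ℝ) (hS : ContDiff ℝ 1 S)
    (t₀ t₁ : ℝ) (ht : t₀ < t₁)
    (Q : Set (ℝ × ℝ)) (hQ : Q = Set.Ioo t₀ t₁ ×ˢ Set.Ioo (0 : ℝ) 1)
    (μ : Measure (ℝ × ℝ)) (hμ : μ = volume.restrict Q)
    (V : Submodule ℝ (Lp (EuclideanSpace ℝ (Fin D)) 2 μ))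
    (hVclosed : IsClosed (V : Set (Lp (EuclideanSpace ℝ (Fin D)) 2 μ)))
    (hVK : ∀ f ∈ V, (mulVecCLM K).compLp f ∈ V)
    (hVL : ∀ f ∈ V, (mulVecCLM L).compLp f ∈ V)
    -- `P` is the orthogonal projection of `L²(Q; ℝ^D)` onto `V`
    (P : Lp (EuclideanSpace ℝ (Fin D)) 2 μ → Lp (EuclideanSpace ℝ (Fin D)) 2 μ)
    (hPmem : ∀ f, P f ∈ V)
    (hPorth : ∀ f, ∀ g ∈ V, (inner ℝ (f - P f) g : ℝ) = 0)
    (Z : ℝ × ℝ → EuclideanSpace ℝ (Fin D)) (hZ : ContDiff ℝ 2 Z)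
    (hper : ∀ t x : ℝ, Z (t, x + 1) = Z (t, x))
    (hZt : MemLp (pt Z) 2 μ) (hZtV : hZt.toLp (pt Z) ∈ V)
    (hZx : MemLp (px Z) 2 μ)
    (hscheme : ∀ φ ∈ V,
      (∫ p, (inner ℝ (mulVecCLM K (pt Z p) + mulVecCLM L (px Z p)
          - gradient S (Z p)) (φ p) : ℝ) ∂μ) = 0) :
    (∫ p,
        (pt (fun q => (1 / 2 : ℝ) * (inner ℝ (px Z q) (mulVecCLM K (Z q)) : ℝ)) p
          + px (fun q => (1 / 2 : ℝ) * (inner ℝ (pt Z q) (mulVecCLM K (Z q)) : ℝ)) p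
          - (inner ℝ (gradient S (Z p)) (P (hZx.toLp (px Z)) p) : ℝ)) ∂μ) = 0 :=
  consistent_discrete_momentum_conservation_general D K L hK hL S hS t₀ t₁ Q hQ μ hμ V hVK hVL P
    hPmem hPorth Z hZ hper hZt hZtV hZx hscheme
end
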